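/- If V ⊆ ℕ is consistent and sound (V ⊆ G(V)), then there exists a smallest consistent fixed point of G containing V; that is, there exists a consistent set U ⊆ ℕ with G(U) = U and V ⊆ U such that U ⊆ U' for every consistent set U' ⊆ ℕ with G(U') = U' and V ⊆ U'. -/

import Mathlib

/-!
Any consistent fixed point `M ⊇ V` bounds the least fixed point `L` of the monotone operator
`U ↦ V ∪ G(U)` on the full power set, so `L` is consistent; since `V ⊆ G(V) ⊆ G(L)`, `L` is a
fixed point of `G` itself, and it lies below every consistent fixed point of `G` containing `V`.
Such an `M` exists by Zorn's lemma: the consistent sound sets containing `V` are closed under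
unions of chains, and a maximal one `M` satisfies `M ⊆ G(M)`, where `G(M)` is again consistent
and sound, hence `G(M) = M`.
-/

/-- Sentences of the augmented language 𝓛. -/
inductive Sent (B : Type) : Type where
  | base : B → Sent B
  | Tr : ℕ → Sent B
  | exT : Sent B
  | allT : Sent B
  | neg : Sent B → Sent B
  | or : Sent B → Sent B → Sent B
  | and : Sent B → Sent B → Sent B
  | imp : Sent B → Sent B → Sent B
  | iff : Sent B → Sent B → Sent B

variable {B : Type}

mutual
/-- `isTrue gn v U A` means `#A ∈ G(U)` according to rules (r1)–(r9). -/
def isTrue (gn : Sent B → ℕ) (v : B → Bool) (U : Set ℕ) : Sent B → Prop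
  | .base b => v b = true
  | .Tr n => ∃ A : Sent B, n = gn A ∧ gn A ∈ U
  | .exT => ∃ n : ℕ, ∃ A : Sent B, n = gn A ∧ gn A ∈ U
  | .allT => ∀ n : ℕ, ∃ A : Sent B, n = gn A ∧ gn A ∈ U
  | .neg A => isFalse gn v U A
  | .or A C => isTrue gn v U A ∨ isTrue gn v U C
  | .and A C => isTrue gn v U A ∧ isTrue gn v U C
  | .imp A C => isFalse gn v U A ∨ isTrue gn v U C
  | .iff A C => (isTrue gn v U A ∧ isTrue gn v U C) ∨ (isFalse gn v U A ∧ isFalse gn v U C)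

/-- `isFalse gn v U A` means `#A ∈ F(U)` according to rules (r1)–(r9). -/
def isFalse (gn : Sent B → ℕ) (v : B → Bool) (U : Set ℕ) : Sent B → Prop
  | .base b => v b = false
  | .Tr n => ∃ A : Sent B, n = gn A ∧ gn (.neg A) ∈ U
  | .exT => ∀ n : ℕ, ∃ A : Sent B, n = gn A ∧ gn (.neg A) ∈ U
  | .allT => ∃ n : ℕ, ∃ A : Sent B, n = gn A ∧ gn (.neg A) ∈ U
  | .neg A => isTrue gn v U A
  | .or A C => isFalse gn v U A ∧ isFalse gn v U C
  | .and A C => isFalse gn v U A ∨ isFalse gn v U C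
  | .imp A C => isTrue gn v U A ∧ isFalse gn v U C
  | .iff A C => (isTrue gn v U A ∧ isFalse gn v U C) ∨ (isFalse gn v U A ∧ isTrue gn v U C)
end

/-- `G U`: Gödel numbers of sentences declared true over `U`. -/
def GSet (gn : Sent B → ℕ) (v : B → Bool) (U : Set ℕ) : Set ℕ :=
  { n | ∃ A : Sent B, n = gn A ∧ isTrue gn v U A }

/-- `F U`: Gödel numbers of sentences declared false over `U`. -/
def FSet (gn : Sent B → ℕ) (v : B → Bool) (U : Set ℕ) : Set ℕ :=
  { n | ∃ A : Sent B, n = gn A ∧ isFalse gn v U A }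

/-- `U` is consistent: no sentence has both itself and its negation in `U`. -/
def Consistent (gn : Sent B → ℕ) (U : Set ℕ) : Prop :=
  ¬ ∃ A : Sent B, gn A ∈ U ∧ gn (.neg A) ∈ U

def Sound (gn : Sent B → ℕ) (v : B → Bool) (V : Set ℕ) : Prop :=
  V ⊆ GSet gn v V

section

variable {gn : Sent B → ℕ} {v : B → Bool}

theorem isTrue_isFalse_mono {U U' : Set ℕ} (h : U ⊆ U') (A : Sent B) :
    (isTrue gn v U A → isTrue gn v U' A) ∧ (isFalse gn v U A → isFalse gn v U' A) := by
  induction A with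
  | base b => exact ⟨id, id⟩
  | Tr n =>
    exact ⟨fun ⟨A, hn, hA⟩ => ⟨A, hn, h hA⟩, fun ⟨A, hn, hA⟩ => ⟨A, hn, h hA⟩⟩
  | exT =>
    exact ⟨fun ⟨n, A, hn, hA⟩ => ⟨n, A, hn, h hA⟩,
      fun hall n => let ⟨A, hn, hA⟩ := hall n; ⟨A, hn, h hA⟩⟩
  | allT =>
    exact ⟨fun hall n => let ⟨A, hn, hA⟩ := hall n; ⟨A, hn, h hA⟩,
      fun ⟨n, A, hn, hA⟩ => ⟨n, A, hn, h hA⟩⟩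
  | neg A ih => exact ⟨ih.2, ih.1⟩
  | or A C ihA ihC =>
    exact ⟨Or.imp ihA.1 ihC.1, And.imp ihA.2 ihC.2⟩
  | and A C ihA ihC =>
    exact ⟨And.imp ihA.1 ihC.1, Or.imp ihA.2 ihC.2⟩
  | imp A C ihA ihC =>
    exact ⟨Or.imp ihA.2 ihC.1, And.imp ihA.1 ihC.2⟩
  | iff A C ihA ihC =>
    exact ⟨Or.imp (And.imp ihA.1 ihC.1) (And.imp ihA.2 ihC.2),
      Or.imp (And.imp ihA.1 ihC.2) (And.imp ihA.2 ihC.1)⟩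

theorem GSet_mono : Monotone (GSet gn v) :=
  fun _ _ h _ ⟨A, hn, hA⟩ => ⟨A, hn, (isTrue_isFalse_mono h A).1 hA⟩

theorem Consistent.mono {U U' : Set ℕ} (hU' : Consistent gn U') (h : U ⊆ U') :
    Consistent gn U :=
  fun ⟨A, hA, hnA⟩ => hU' ⟨A, h hA, h hnA⟩

theorem Consistent.not_isTrue_and_isFalse (hgn : Function.Injective gn) {U : Set ℕ}
    (hU : Consistent gn U) (A : Sent B) : ¬ (isTrue gn v U A ∧ isFalse gn v U A) := by
  induction A with
  | base b =>
    rintro ⟨h₁, h₂⟩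
    exact Bool.noConfusion ((h₁ : v b = true).symm.trans h₂)
  | Tr n =>
    rintro ⟨⟨A, rfl, hA⟩, ⟨A', hn, hnA'⟩⟩
    obtain rfl := hgn hn
    exact hU ⟨A, hA, hnA'⟩
  | exT =>
    rintro ⟨⟨n, A, -, hA⟩, hall⟩
    obtain ⟨A', hn, hnA'⟩ := hall (gn A)
    obtain rfl := hgn hn
    exact hU ⟨A, hA, hnA'⟩
  | allT =>
    rintro ⟨hall, ⟨n, A', -, hnA'⟩⟩
    obtain ⟨A, hn, hA⟩ := hall (gn A')
    obtain rfl := hgn hn.symm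
    exact hU ⟨A, hA, hnA'⟩
  | neg A ih => exact fun h => ih h.symm
  | or A C ihA ihC =>
    rintro ⟨hA | hC, hfA, hfC⟩
    exacts [ihA ⟨hA, hfA⟩, ihC ⟨hC, hfC⟩]
  | and A C ihA ihC =>
    rintro ⟨⟨hA, hC⟩, hfA | hfC⟩
    exacts [ihA ⟨hA, hfA⟩, ihC ⟨hC, hfC⟩]
  | imp A C ihA ihC =>
    rintro ⟨hfA | hC, hA, hfC⟩
    exacts [ihA ⟨hA, hfA⟩, ihC ⟨hC, hfC⟩]
  | iff A C ihA ihC =>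
    rintro ⟨⟨hA, hC⟩ | ⟨hfA, hfC⟩, ⟨hA', hfC'⟩ | ⟨hfA', hC'⟩⟩
    exacts [ihC ⟨hC, hfC'⟩, ihA ⟨hA, hfA'⟩, ihA ⟨hA', hfA⟩, ihC ⟨hC', hfC⟩]

theorem Consistent.GSet (hgn : Function.Injective gn) {U : Set ℕ} (hU : Consistent gn U) :
    Consistent gn (GSet gn v U) := by
  rintro ⟨A, ⟨A₁, h₁, hA₁⟩, ⟨A₂, h₂, hA₂⟩⟩
  obtain rfl := hgn h₁
  obtain rfl := hgn h₂
  exact hU.not_isTrue_and_isFalse hgn A ⟨hA₁, hA₂⟩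

theorem Sound.GSet {U : Set ℕ} (hU : Sound gn v U) : Sound gn v (GSet gn v U) :=
  GSet_mono hU

theorem consistent_sUnion_of_isChain {c : Set (Set ℕ)} (hc : IsChain (· ⊆ ·) c)
    (hcons : ∀ U ∈ c, Consistent gn U) : Consistent gn (⋃₀ c) := by
  rintro ⟨A, ⟨U₁, hU₁, hA⟩, ⟨U₂, hU₂, hnA⟩⟩
  rcases hc.total hU₁ hU₂ with h | h
  · exact hcons U₂ hU₂ ⟨A, h hA, hnA⟩
  · exact hcons U₁ hU₁ ⟨A, hA, h hnA⟩

theorem sound_sUnion {c : Set (Set ℕ)} (hsound : ∀ U ∈ c, Sound gn v U) :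
    Sound gn v (⋃₀ c) :=
  fun _ ⟨U, hU, hn⟩ => GSet_mono (Set.subset_sUnion_of_mem hU) (hsound U hU hn)

theorem exists_consistent_fixedPoint_superset (hgn : Function.Injective gn) {V : Set ℕ}
    (hV : Consistent gn V) (hsound : Sound gn v V) :
    ∃ M, V ⊆ M ∧ Consistent gn M ∧ GSet gn v M = M := by
  let S : Set (Set ℕ) := {U | V ⊆ U ∧ Consistent gn U ∧ Sound gn v U}
  have hchain : ∀ c ⊆ S, IsChain (· ⊆ ·) c → c.Nonempty → ∃ ub ∈ S, ∀ U ∈ c, U ⊆ ub := by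
    rintro c hcS hc ⟨U, hU⟩
    refine ⟨⋃₀ c, ⟨(hcS hU).1.trans (Set.subset_sUnion_of_mem hU),
      consistent_sUnion_of_isChain hc fun U hU => (hcS hU).2.1,
      sound_sUnion fun U hU => (hcS hU).2.2⟩, fun U => Set.subset_sUnion_of_mem⟩
  obtain ⟨M, hVM, hM⟩ := zorn_subset_nonempty S hchain V ⟨subset_rfl, hV, hsound⟩
  obtain ⟨-, hMcons, hMsound⟩ := hM.prop
  have hGM : GSet gn v M ∈ S := ⟨hVM.trans hMsound, hMcons.GSet hgn, hMsound.GSet⟩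
  exact ⟨M, hVM, hMcons, (hM.eq_of_subset hGM hMsound).symm⟩

end

/-- If `V` is consistent and sound, there is a smallest consistent
fixed point of `G` containing `V`. -/
theorem stmt_5 {B : Type} (gn : Sent B → ℕ) (hgn : Function.Injective gn)
    (v : B → Bool) (V : Set ℕ) (hV : Consistent gn V) (hsound : V ⊆ GSet gn v V) :
    ∃ U : Set ℕ, Consistent gn U ∧ GSet gn v U = U ∧ V ⊆ U ∧
      ∀ U' : Set ℕ, Consistent gn U' → GSet gn v U' = U' → V ⊆ U' → U ⊆ U' := by
  let f : Set ℕ →o Set ℕ :=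
    ⟨fun U => V ∪ GSet gn v U, fun _ _ h => Set.union_subset_union_right V (GSet_mono h)⟩
  have hf : ∀ {U}, V ⊆ U → GSet gn v U = U → f U = U := fun hVU hU => by
    change V ∪ GSet gn v _ = _
    rw [hU, Set.union_eq_self_of_subset_left hVU]
  have hfix : V ∪ GSet gn v f.lfp = f.lfp := f.map_lfp
  have hVL : V ⊆ f.lfp := hfix ▸ Set.subset_union_left
  have hGL : GSet gn v f.lfp = f.lfp := by
    rwa [Set.union_eq_self_of_subset_left (hsound.trans (GSet_mono hVL))] at hfix
  obtain ⟨M, hVM, hMcons, hM⟩ := exists_consistent_fixedPoint_superset hgn hV hsound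
  exact ⟨f.lfp, hMcons.mono (f.lfp_le_fixed (hf hVM hM)), hGL, hVL,
    fun U' _ hU' hVU' => f.lfp_le_fixed (hf hVU' hU')⟩
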